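/- Let κ be a regular uncountable cardinal. Then the complete bipartite graph K_{2^κ, 2^κ} has chromatic number at most 2 (Chr(K_{2^κ,2^κ}, 2) holds), but the stationary list colorability SList(K_{2^κ,2^κ}, κ) fails: there is a list function assigning to each vertex a stationary subset of κ such that no choice function is a good coloring. -/

import Mathlib

open Cardinal Set

/-- C is a club (closed unbounded) subset of the ordinal o. -/
def IsClubIn (C : Set Ordinal) (o : Ordinal) : Prop :=
  C ⊆ Set.Iio o ∧ (∀ a < o, ∃ b ∈ C, a ≤ b ∧ b < o) ∧
  ∀ a < o, 0 < a → (∀ b < a, ∃ x ∈ C, b < x ∧ x < a) → a ∈ C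

/-- S is a stationary subset of the ordinal o. -/
def IsStationaryIn (S : Set Ordinal) (o : Ordinal) : Prop :=
  S ⊆ Set.Iio o ∧ ∀ C, IsClubIn C o → (S ∩ C).Nonempty

/-! Color `K_{A,B}` by sides. For the lists, let both `A` and `B` index all stationary subsets
of `κ`; there are at most `2 ^ κ` of them. The colors a proper choice uses on `A` then meet every
stationary set, so they contain a club, and likewise on `B`. Since `cf κ > ω`, any two clubs meet,
so some vertex of `A` and some vertex of `B` receive the same color. -/

universe u

namespace IsClubIn

variable {C D : Set Ordinal.{u}} {o : Ordinal.{u}}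

theorem exists_mem_gt (hC : IsClubIn C o) (ho : Order.IsSuccLimit o) {x : Ordinal} (hx : x < o) :
    ∃ y ∈ C, x < y ∧ y < o := by
  obtain ⟨y, hyC, hxy, hyo⟩ := hC.2.1 (Order.succ x) (ho.succ_lt hx)
  exact ⟨y, hyC, (Order.lt_succ x).trans_le hxy, hyo⟩

theorem iSup_mem (hC : IsClubIn C o) (ho : ℵ₀ < o.cof) {g : ℕ → Ordinal.{u}} (hg : StrictMono g)
    (hgC : ∀ n, g n ∈ C) : ⨆ n, g n ∈ C := by
  have hgs : ∀ n, g n < ⨆ n, g n := fun n =>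
    (hg n.lt_succ_self).trans_le (Ordinal.le_iSup g (n + 1))
  have hso : ⨆ n, g n < o :=
    Ordinal.lift_iSup_lt_of_lt_cof (by simpa using ho) fun n => hC.1 (hgC n)
  refine hC.2.2 _ hso (zero_le.trans_lt (hgs 0)) fun b hb => ?_
  obtain ⟨n, hn⟩ := Ordinal.lt_iSup_iff.1 hb
  exact ⟨g n, hgC n, hn, hgs n⟩

/-- Interleave `C` and `D` in an increasing `ω`-sequence; its supremum lies in both clubs. -/
theorem inter_nonempty (hC : IsClubIn C o) (hD : IsClubIn D o) (ho : ℵ₀ < o.cof) :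
    (C ∩ D).Nonempty := by
  have hlim : Order.IsSuccLimit o := Ordinal.one_lt_cof_iff.1 (one_lt_aleph0.trans ho)
  have next : ∀ {E}, IsClubIn E o → ∀ x : Iio o, ∃ y : Iio o, y.1 ∈ E ∧ x < y := fun hE x =>
    let ⟨y, hyE, hxy, hyo⟩ := hE.exists_mem_gt hlim x.2
    ⟨⟨y, hyo⟩, hyE, hxy⟩
  choose F hFC hFlt using next hC
  choose G hGD hGlt using next hD
  let c n := F ((G ∘ F)^[n] ⟨0, hlim.bot_lt⟩)
  let d n := G (c n)
  have hcd : ∀ n, (c n).1 < (d n).1 := fun n => hGlt _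
  have hdc : ∀ n, (d n).1 < (c (n + 1)).1 := fun n => by
    simp only [c, d, Function.iterate_succ_apply', Function.comp_apply]
    exact hFlt _
  have hsup : ⨆ n, (c n).1 = ⨆ n, (d n).1 := le_antisymm
    (Ordinal.iSup_le fun n => (hcd n).le.trans (Ordinal.le_iSup (fun n => (d n).1) n))
    (Ordinal.iSup_le fun n => (hdc n).le.trans (Ordinal.le_iSup (fun n => (c n).1) (n + 1)))
  refine ⟨_, hC.iSup_mem ho (strictMono_nat_of_lt_succ fun n => (hcd n).trans (hdc n))
    fun n => hFC _, ?_⟩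
  rw [hsup]
  exact hD.iSup_mem ho (strictMono_nat_of_lt_succ fun n => (hdc n).trans (hcd (n + 1)))
    fun n => hGD _

end IsClubIn

section Stationary

variable {o : Ordinal.{u}}

theorem isStationaryIn_Iio (ho : 0 < o) : IsStationaryIn (Iio o) o := by
  refine ⟨subset_rfl, fun C hC => ?_⟩
  obtain ⟨b, hbC, -, hbo⟩ := hC.2.1 0 ho
  exact ⟨b, hbo, hbC⟩

theorem exists_isClubIn_subset_of_forall_inter_nonempty {Z : Set Ordinal.{u}}
    (hZ : ∀ S, IsStationaryIn S o → (Z ∩ S).Nonempty) : ∃ C, IsClubIn C o ∧ C ⊆ Z := by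
  by_contra! hno
  refine (hZ (Iio o \ Z) ⟨sdiff_subset, fun C hC => ?_⟩).elim fun x hx => hx.2.2 hx.1
  obtain ⟨x, hxC, hxZ⟩ := not_subset.1 (hno C hC)
  exact ⟨x, ⟨hC.1 hxC, hxZ⟩, hxC⟩

theorem inter_nonempty_of_forall_isStationaryIn (ho : ℵ₀ < o.cof) {Z W : Set Ordinal.{u}}
    (hZ : ∀ S, IsStationaryIn S o → (Z ∩ S).Nonempty)
    (hW : ∀ S, IsStationaryIn S o → (W ∩ S).Nonempty) : (Z ∩ W).Nonempty := by
  obtain ⟨C, hC, hCZ⟩ := exists_isClubIn_subset_of_forall_inter_nonempty hZ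
  obtain ⟨D, hD, hDW⟩ := exists_isClubIn_subset_of_forall_inter_nonempty hW
  exact (hC.inter_nonempty hD ho).mono (inter_subset_inter hCZ hDW)

theorem range_inter_nonempty_of_exists_subset {α ι : Type*} {L : ι → Set α} {c : ι → α}
    (hc : ∀ i, c i ∈ L i) {S : Set α} (hS : ∃ i, L i ⊆ S) : (range c ∩ S).Nonempty :=
  let ⟨i, hi⟩ := hS
  ⟨c i, mem_range_self i, hi (hc i)⟩

theorem exists_eq_of_forall_isStationaryIn_exists_subset (ho : ℵ₀ < o.cof) {A B : Type*}
    {LA : A → Set Ordinal.{u}} {LB : B → Set Ordinal.{u}}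
    (hLA : ∀ S, IsStationaryIn S o → ∃ a, LA a ⊆ S) (hLB : ∀ S, IsStationaryIn S o → ∃ b, LB b ⊆ S)
    {cA : A → Ordinal.{u}} {cB : B → Ordinal.{u}}
    (hcA : ∀ a, cA a ∈ LA a) (hcB : ∀ b, cB b ∈ LB b) :
    ∃ a b, cA a = cB b := by
  obtain ⟨x, ⟨a, rfl⟩, ⟨b, hb⟩⟩ := inter_nonempty_of_forall_isStationaryIn ho
    (fun S hS => range_inter_nonempty_of_exists_subset hcA (hLA S hS))
    (fun S hS => range_inter_nonempty_of_exists_subset hcB (hLB S hS))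
  exact ⟨a, b, hb.symm⟩

theorem exists_isStationaryIn_surjective {κ : Cardinal.{u}} (hκ : κ ≠ 0) {A : Type u}
    (hA : 2 ^ κ ≤ #A) : ∃ L : A → Set Ordinal.{u},
      (∀ a, IsStationaryIn (L a) κ.ord) ∧ ∀ S, IsStationaryIn S κ.ord → ∃ a, L a = S := by
  let Stat := {S : Set Ordinal.{u} // IsStationaryIn S κ.ord}
  have hStat : Nonempty Stat :=
    ⟨⟨Iio κ.ord, isStationaryIn_Iio (Cardinal.ord_pos.2 (pos_iff_ne_zero.2 hκ))⟩⟩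
  have toSet : Stat ↪ Set (Iio κ.ord) :=
    ⟨fun S => Subtype.val ⁻¹' S.1, fun S T h => Subtype.ext <| by
      rw [← inter_eq_right.2 S.2.1, ← inter_eq_right.2 T.2.1, ← Subtype.image_preimage_coe,
        ← Subtype.image_preimage_coe]
      exact congrArg _ h⟩
  obtain ⟨toA⟩ : Nonempty (Set (Iio κ.ord) ↪ A) := by
    rw [← lift_mk_le', mk_set, mk_Iio_ordinal, card_ord, ← lift_two_power, lift_id'.{u, u + 1}]
    exact lift_le.2 hA
  obtain ⟨f, hf⟩ := Function.exists_surjective_iff.2 ⟨⟨fun _ => hStat.some⟩, ⟨toSet.trans toA⟩⟩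
  exact ⟨fun a => (f a).1, fun a => (f a).2, fun S hS => (hf ⟨S, hS⟩).imp fun _ h => congrArg _ h⟩

end Stationary

/-- Chr(K_{2^κ,2^κ}, 2) holds but SList(K_{2^κ,2^κ}, κ) fails. -/
theorem chr_holds_slist_fails {A B : Type} (κ : Cardinal)
    (hreg : κ.IsRegular) (hunc : ℵ₀ < κ)
    (hA : #A = 2 ^ κ) (hB : #B = 2 ^ κ) :
    (∃ c : A ⊕ B → Fin 2,
      ∀ v w, (completeBipartiteGraph A B).Adj v w → c v ≠ c w) ∧
    (∃ L : A ⊕ B → Set Ordinal, (∀ v, IsStationaryIn (L v) κ.ord) ∧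
      ¬ ∃ c : A ⊕ B → Ordinal, (∀ v, c v ∈ L v) ∧
        ∀ v w, (completeBipartiteGraph A B).Adj v w → c v ≠ c w) := by
  obtain ⟨C⟩ := (SimpleGraph.CompleteBipartiteGraph.bicoloring A B).colorable
  refine ⟨⟨C, fun _ _ => C.valid⟩, ?_⟩
  have hκ : κ ≠ 0 := (aleph0_pos.trans hunc).ne'
  have hcof : ℵ₀ < κ.ord.cof := hreg.cof_ord.symm ▸ hunc
  obtain ⟨LA, hLA, hLA_surj⟩ := exists_isStationaryIn_surjective hκ hA.ge
  obtain ⟨LB, hLB, hLB_surj⟩ := exists_isStationaryIn_surjective hκ hB.ge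
  refine ⟨Sum.elim LA LB, Sum.rec hLA hLB, fun ⟨c, hc, hproper⟩ => ?_⟩
  obtain ⟨a, b, hab⟩ := exists_eq_of_forall_isStationaryIn_exists_subset hcof
    (fun S hS => (hLA_surj S hS).imp fun _ h => h.subset)
    (fun S hS => (hLB_surj S hS).imp fun _ h => h.subset)
    (cA := c ∘ Sum.inl) (cB := c ∘ Sum.inr) (fun a => hc (.inl a)) (fun b => hc (.inr b))
  exact hproper (.inl a) (.inr b) (by simp) hab
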